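/- arXiv:1902.02021 — 3 statements merged into one kernel-verified Lean document; each statement's English description precedes it below -/
import Mathlib

section
/- Let f be a continuously differentiable probability density on [0,1] and τ : [0,1] → ℝ continuously differentiable. Let Δ = ∫₀¹ τ(p) p f(p) dp and E_k = Δ / (∫₀¹ f(p)(1−(1−p)^k) dp) for k ≥ 1 (assuming the denominator is positive, e.g. ∫₀¹ f(p)(1−(1−p)^k)dp ∈ (0,1]). Then there exists a constant M such that for all sufficiently large k, |E_k − Δ − Δ·f(0)/k| ≤ M/k². -/
/-!
Write `I k = ∫₀¹ f(p) (1 - p)^k dp`, so that the denominator is `1 - I k` because `f` is a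
density. The weight `(1 - p)^k` concentrates at `p = 0` with total mass `1/(k+1)`, and `f` is
Lipschitz there, so `I k = f 0 / k + O(k⁻²)` and in particular `I k = O(k⁻¹)`. Expanding
`Δ / (1 - I) = Δ + Δ I + Δ I² / (1 - I)` then gives the first-order term `Δ f(0) / k` with an
`O(k⁻²)` remainder.
-/

open Set intervalIntegral

open MeasureTheory (volume)

lemma continuous_one_sub_pow (k : ℕ) : Continuous fun p : ℝ => (1 - p) ^ k := by fun_prop

lemma integral_one_sub_pow (k : ℕ) : ∫ p in (0:ℝ)..1, (1 - p) ^ k = 1 / (k + 1) := by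
  simp [integral_comp_sub_left (fun x : ℝ => x ^ k), integral_pow]

lemma integral_mul_one_sub_pow (k : ℕ) :
    ∫ p in (0:ℝ)..1, p * (1 - p) ^ k = 1 / ((k + 1) * (k + 2)) := by
  have hpow : ∀ n : ℕ, IntervalIntegrable (fun p : ℝ => (1 - p) ^ n) volume 0 1 := fun n =>
    (continuous_one_sub_pow n).intervalIntegrable 0 1
  calc ∫ p in (0:ℝ)..1, p * (1 - p) ^ k
      = ∫ p in (0:ℝ)..1, ((1 - p) ^ k - (1 - p) ^ (k + 1)) :=
        integral_congr fun p _ => by ring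
    _ = 1 / ((k + 1) * (k + 2)) := by
        rw [integral_sub (hpow k) (hpow (k + 1)), integral_one_sub_pow,
          integral_one_sub_pow]
        push_cast
        field_simp
        ring

lemma abs_integral_mul_one_sub_pow_le {g : ℝ → ℝ} {B : ℝ}
    (hg : ∀ p ∈ Icc (0:ℝ) 1, |g p| ≤ B) (k : ℕ) :
    |∫ p in (0:ℝ)..1, g p * (1 - p) ^ k| ≤ B / (k + 1) := by
  have hbound : ∀ p ∈ Ioc (0:ℝ) 1, ‖g p * (1 - p) ^ k‖ ≤ B * (1 - p) ^ k := fun p hp => by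
    have hpow : 0 ≤ (1 - p) ^ k := pow_nonneg (by linarith [hp.2]) k
    rw [Real.norm_eq_abs, abs_mul, abs_of_nonneg hpow]
    exact mul_le_mul_of_nonneg_right (hg p (Ioc_subset_Icc_self hp)) hpow
  calc |∫ p in (0:ℝ)..1, g p * (1 - p) ^ k|
      ≤ ∫ p in (0:ℝ)..1, B * (1 - p) ^ k :=
        norm_integral_le_of_norm_le zero_le_one (.of_forall hbound)
          ((continuous_const.mul (continuous_one_sub_pow k)).intervalIntegrable 0 1)
    _ = B / (k + 1) := by rw [integral_const_mul, integral_one_sub_pow]; ring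

lemma abs_integral_mul_one_sub_pow_sub_le {f : ℝ → ℝ} {L : ℝ}
    (hf : IntervalIntegrable f volume 0 1) (hlip : ∀ p ∈ Icc (0:ℝ) 1, |f p - f 0| ≤ L * p)
    (k : ℕ) :
    |(∫ p in (0:ℝ)..1, f p * (1 - p) ^ k) - f 0 / (k + 1)| ≤ L / ((k + 1) * (k + 2)) := by
  have hpow := continuous_one_sub_pow k
  have hshift : (∫ p in (0:ℝ)..1, f p * (1 - p) ^ k) - f 0 / (k + 1)
      = ∫ p in (0:ℝ)..1, (f p - f 0) * (1 - p) ^ k := by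
    simp only [sub_mul]
    rw [integral_sub (hf.mul_continuousOn hpow.continuousOn)
      (g := fun p => f 0 * (1 - p) ^ k) ((continuous_const.mul hpow).intervalIntegrable 0 1),
      integral_const_mul, integral_one_sub_pow]
    ring
  have hbound : ∀ p ∈ Ioc (0:ℝ) 1, ‖(f p - f 0) * (1 - p) ^ k‖ ≤ L * (p * (1 - p) ^ k) :=
    fun p hp => by
      have hpow_nonneg : 0 ≤ (1 - p) ^ k := pow_nonneg (by linarith [hp.2]) k
      rw [Real.norm_eq_abs, abs_mul, abs_of_nonneg hpow_nonneg, ← mul_assoc]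
      exact mul_le_mul_of_nonneg_right (hlip p (Ioc_subset_Icc_self hp)) hpow_nonneg
  calc |(∫ p in (0:ℝ)..1, f p * (1 - p) ^ k) - f 0 / (k + 1)|
      ≤ ∫ p in (0:ℝ)..1, L * (p * (1 - p) ^ k) := by
        rw [hshift]
        exact norm_integral_le_of_norm_le zero_le_one (.of_forall hbound)
          ((continuous_const.mul (continuous_id.mul hpow)).intervalIntegrable 0 1)
    _ = L / ((k + 1) * (k + 2)) := by
        rw [integral_const_mul, integral_mul_one_sub_pow]
        ring

lemma exists_abs_integral_mul_one_sub_pow_le {f f' : ℝ → ℝ}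
    (hf : ∀ p ∈ Icc (0:ℝ) 1, HasDerivWithinAt f (f' p) (Icc 0 1) p)
    (hf' : ContinuousOn f' (Icc 0 1)) :
    ∃ A B : ℝ, ∀ k : ℕ, 1 ≤ k →
      |∫ p in (0:ℝ)..1, f p * (1 - p) ^ k| ≤ B / k ∧
      |(∫ p in (0:ℝ)..1, f p * (1 - p) ^ k) - f 0 / k| ≤ A / k ^ 2 := by
  have hcont : ContinuousOn f (Icc 0 1) := fun p hp => (hf p hp).continuousWithinAt
  obtain ⟨B, hB⟩ := isCompact_Icc.exists_bound_of_continuousOn hcont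
  obtain ⟨L, hL⟩ := isCompact_Icc.exists_bound_of_continuousOn hf'
  have h0 : (0:ℝ) ∈ Icc (0:ℝ) 1 := left_mem_Icc.2 zero_le_one
  have hB0 : 0 ≤ B := (norm_nonneg _).trans (hB 0 h0)
  have hlip : ∀ p ∈ Icc (0:ℝ) 1, |f p - f 0| ≤ L * p := fun p hp => by
    simpa [Real.norm_eq_abs, abs_of_nonneg hp.1] using
      (convex_Icc 0 1).norm_image_sub_le_of_norm_hasDerivWithin_le hf hL h0 hp
  refine ⟨L + |f 0|, B, fun k hk => ?_⟩
  have hk : (1:ℝ) ≤ k := by exact_mod_cast hk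
  have hL0 : 0 ≤ L := by simpa using (abs_nonneg _).trans (hlip 1 (right_mem_Icc.2 zero_le_one))
  have hstep : |f 0 / (k + 1) - f 0 / k| = |f 0| / (k * (k + 1)) := by
    rw [show f 0 / (k + 1) - f 0 / k = -(f 0 / (k * (k + 1))) by field_simp; ring,
      abs_neg, abs_div, abs_of_pos (mul_pos (by linarith) (by linarith) : (0:ℝ) < k * (k + 1))]
  constructor
  · calc _ ≤ B / (k + 1) := abs_integral_mul_one_sub_pow_le hB k
      _ ≤ B / k := div_le_div_of_nonneg_left hB0 (by linarith) (by linarith)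
  · calc _ ≤ |(∫ p in (0:ℝ)..1, f p * (1 - p) ^ k) - f 0 / (k + 1)|
          + |f 0 / (k + 1) - f 0 / k| := abs_sub_le _ _ _
      _ ≤ L / ((k + 1) * (k + 2)) + |f 0| / (k * (k + 1)) :=
          add_le_add (abs_integral_mul_one_sub_pow_sub_le
            (hcont.intervalIntegrable_of_Icc zero_le_one) hlip k) hstep.le
      _ ≤ L / k ^ 2 + |f 0| / k ^ 2 := by gcongr <;> nlinarith
      _ = (L + |f 0|) / k ^ 2 := by ring

lemma abs_div_one_sub_sub_le {Δ I c k A B : ℝ} (hk : 0 < k) (hkB : 2 * B ≤ k)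
    (hI : |I| ≤ B / k) (hIc : |I - c / k| ≤ A / k ^ 2) :
    |Δ / (1 - I) - Δ - Δ * c / k| ≤ |Δ| * (A + 2 * B ^ 2) / k ^ 2 := by
  have hden : 1 / 2 ≤ 1 - I := by
    have : B / k ≤ 1 / 2 := by rw [div_le_iff₀ hk]; linarith
    linarith [le_abs_self I]
  have hexpand : Δ / (1 - I) - Δ - Δ * c / k = Δ * ((I - c / k) + I ^ 2 / (1 - I)) := by
    field_simp
    ring
  have hsq : I ^ 2 / (1 - I) ≤ 2 * B ^ 2 / k ^ 2 := calc
    I ^ 2 / (1 - I) ≤ I ^ 2 / (1 / 2) :=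
        div_le_div_of_nonneg_left (sq_nonneg _) (by norm_num) hden
    _ = 2 * |I| ^ 2 := by rw [sq_abs]; ring
    _ ≤ 2 * (B / k) ^ 2 := by gcongr
    _ = 2 * B ^ 2 / k ^ 2 := by ring
  rw [hexpand, abs_mul, mul_div_assoc]
  gcongr
  calc |(I - c / k) + I ^ 2 / (1 - I)| ≤ |I - c / k| + |I ^ 2 / (1 - I)| := abs_add_le _ _
    _ ≤ A / k ^ 2 + 2 * B ^ 2 / k ^ 2 :=
        add_le_add hIc (by rwa [abs_of_nonneg (div_nonneg (sq_nonneg _) (by linarith))])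
    _ = (A + 2 * B ^ 2) / k ^ 2 := by ring

theorem heavy_user_bias_first_order_general
    (f f' τ : ℝ → ℝ)
    (hf_deriv : ∀ p ∈ Set.Icc (0:ℝ) 1, HasDerivWithinAt f (f' p) (Set.Icc (0:ℝ) 1) p)
    (hf'_cont : ContinuousOn f' (Set.Icc (0:ℝ) 1))
    (hf_density : ∫ p in (0:ℝ)..1, f p = 1) :
    ∃ M : ℝ, ∃ K : ℕ, ∀ k : ℕ, K ≤ k →
      |(∫ p in (0:ℝ)..1, τ p * p * f p) / (∫ p in (0:ℝ)..1, f p * (1 - (1 - p) ^ k))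
          - (∫ p in (0:ℝ)..1, τ p * p * f p)
          - (∫ p in (0:ℝ)..1, τ p * p * f p) * f 0 / k|
        ≤ M / (k : ℝ) ^ 2 := by
  obtain ⟨A, B, hbounds⟩ := exists_abs_integral_mul_one_sub_pow_le hf_deriv hf'_cont
  have hf_int : IntervalIntegrable f volume 0 1 :=
    ContinuousOn.intervalIntegrable_of_Icc zero_le_one fun p hp =>
      (hf_deriv p hp).continuousWithinAt
  have hden : ∀ k : ℕ, ∫ p in (0:ℝ)..1, f p * (1 - (1 - p) ^ k)
      = 1 - ∫ p in (0:ℝ)..1, f p * (1 - p) ^ k := fun k => by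
    simp only [mul_sub, mul_one]
    rw [integral_sub hf_int (g := fun p => f p * (1 - p) ^ k)
      (hf_int.mul_continuousOn (continuous_one_sub_pow k).continuousOn), hf_density]
  refine ⟨|∫ p in (0:ℝ)..1, τ p * p * f p| * (A + 2 * B ^ 2), ⌈2 * B⌉₊ + 1,
    fun k hk => ?_⟩
  have hk1 : 1 ≤ k := by omega
  have hkB : 2 * B ≤ k :=
    (Nat.le_ceil _).trans (by exact_mod_cast (by omega : ⌈2 * B⌉₊ ≤ k))
  rw [hden k]
  exact abs_div_one_sub_sub_le (by positivity) hkB (hbounds k hk1).1 (hbounds k hk1).2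

/-- Proposition 1: under Model 1 the heavy-user bias of the difference-in-means estimator
equals `Δ f(0) / k + O(k⁻²)`. -/
theorem heavy_user_bias_first_order
    (f f' τ τ' : ℝ → ℝ)
    (hf_deriv : ∀ p ∈ Set.Icc (0:ℝ) 1, HasDerivWithinAt f (f' p) (Set.Icc (0:ℝ) 1) p)
    (hf'_cont : ContinuousOn f' (Set.Icc (0:ℝ) 1))
    (hτ_deriv : ∀ p ∈ Set.Icc (0:ℝ) 1, HasDerivWithinAt τ (τ' p) (Set.Icc (0:ℝ) 1) p)
    (hτ'_cont : ContinuousOn τ' (Set.Icc (0:ℝ) 1))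
    (hf_nonneg : ∀ p ∈ Set.Icc (0:ℝ) 1, 0 ≤ f p)
    (hf_density : ∫ p in (0:ℝ)..1, f p = 1)
    (hden : ∀ k : ℕ, 1 ≤ k →
      (∫ p in (0:ℝ)..1, f p * (1 - (1 - p) ^ k)) ∈ Set.Ioc (0:ℝ) 1) :
    ∃ M : ℝ, ∃ K : ℕ, ∀ k : ℕ, K ≤ k →
      |(∫ p in (0:ℝ)..1, τ p * p * f p) / (∫ p in (0:ℝ)..1, f p * (1 - (1 - p) ^ k))
          - (∫ p in (0:ℝ)..1, τ p * p * f p)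
          - (∫ p in (0:ℝ)..1, τ p * p * f p) * f 0 / k|
        ≤ M / (k : ℝ) ^ 2 :=
  heavy_user_bias_first_order_general f f' τ hf_deriv hf'_cont hf_density
end

section
/- Let f be a continuously differentiable density on [0,1] with f(0) = 0. Let Δ = ∫₀¹ τ(p) p f(p) dp for continuously differentiable τ, and E_k = Δ / ∫₀¹ f(p)(1−(1−p)^k) dp. Then |E_k − Δ| = O(k^{-2}): there exist M, K with |E_k − Δ| ≤ M/k² for k ≥ K. -/
set_option maxHeartbeats 1000000 in
/-- Corollary of Proposition 1: if `f(0) = 0` (no extremely light users), the naive estimator's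
heavy-user bias is `O(k⁻²)`. -/
theorem heavy_user_bias_second_order_when_f_zero
    (f f' τ τ' : ℝ → ℝ)
    (hf_deriv : ∀ p ∈ Set.Icc (0:ℝ) 1, HasDerivWithinAt f (f' p) (Set.Icc (0:ℝ) 1) p)
    (hf'_cont : ContinuousOn f' (Set.Icc (0:ℝ) 1))
    (hτ_deriv : ∀ p ∈ Set.Icc (0:ℝ) 1, HasDerivWithinAt τ (τ' p) (Set.Icc (0:ℝ) 1) p)
    (hτ'_cont : ContinuousOn τ' (Set.Icc (0:ℝ) 1))
    (hf_nonneg : ∀ p ∈ Set.Icc (0:ℝ) 1, 0 ≤ f p)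
    (hf_density : ∫ p in (0:ℝ)..1, f p = 1)
    (hf0 : f 0 = 0)
    (hden : ∀ k : ℕ, 1 ≤ k →
      (∫ p in (0:ℝ)..1, f p * (1 - (1 - p) ^ k)) ∈ Set.Ioc (0:ℝ) 1) :
    ∃ M : ℝ, ∃ K : ℕ, ∀ k : ℕ, K ≤ k →
      |(∫ p in (0:ℝ)..1, τ p * p * f p) / (∫ p in (0:ℝ)..1, f p * (1 - (1 - p) ^ k))
          - (∫ p in (0:ℝ)..1, τ p * p * f p)|
        ≤ M / (k : ℝ) ^ 2 := by
  have h01 : (0:ℝ) ≤ 1 := zero_le_one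
  have huIcc : Set.uIcc (0:ℝ) 1 = Set.Icc 0 1 := Set.uIcc_of_le h01
  have hfc : ContinuousOn f (Set.Icc (0:ℝ) 1) :=
    fun p hp => (hf_deriv p hp).continuousWithinAt
  obtain ⟨C, hC⟩ := isCompact_Icc.exists_bound_of_continuousOn hf'_cont
  have hC0 : 0 ≤ C := (norm_nonneg _).trans (hC 0 (by norm_num))
  have hfle : ∀ p ∈ Set.Icc (0:ℝ) 1, |f p| ≤ C * p := by
    intro p hp
    have h := (convex_Icc (0:ℝ) 1).norm_image_sub_le_of_norm_hasDerivWithin_le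
      hf_deriv (fun x hx => hC x hx) (Set.left_mem_Icc.2 h01) hp
    rw [hf0, sub_zero, sub_zero] at h
    simpa [Real.norm_eq_abs, abs_of_nonneg hp.1] using h
  set Δ := ∫ p in (0:ℝ)..1, τ p * p * f p with hΔ
  refine ⟨2 * |Δ| * C, ⌈2*C⌉₊ + 1, fun k hk => ?_⟩
  have hk1 : 1 ≤ k := le_trans (Nat.le_add_left 1 _) hk
  have hkR : (1:ℝ) ≤ k := by exact_mod_cast hk1
  have hk2C : 2*C ≤ (k:ℝ) := by
    calc 2*C ≤ (⌈2*C⌉₊ : ℝ) := Nat.le_ceil _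
    _ ≤ k := by exact_mod_cast le_trans (Nat.le_succ _) hk
  have hkpos : (0:ℝ) < k := lt_of_lt_of_le one_pos hkR
  have I1 : IntervalIntegrable (fun p : ℝ => f p * (1 - p) ^ k) MeasureTheory.volume 0 1 := by
    apply ContinuousOn.intervalIntegrable
    rw [huIcc]
    exact hfc.mul (Continuous.continuousOn (by continuity))
  have If : IntervalIntegrable f MeasureTheory.volume 0 1 := by
    apply ContinuousOn.intervalIntegrable
    rw [huIcc]; exact hfc
  set Ek := ∫ p in (0:ℝ)..1, f p * (1 - p) ^ k with hEkdef
  have hEk_nonneg : 0 ≤ Ek := by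
    apply intervalIntegral.integral_nonneg h01
    intro p hp
    exact mul_nonneg (hf_nonneg p hp) (pow_nonneg (by linarith [hp.2]) k)
  have hEk_le : Ek ≤ C / (k:ℝ)^2 := by
    have hmono : Ek ≤ ∫ p in (0:ℝ)..1, C * (p * (1 - p) ^ k) := by
      apply intervalIntegral.integral_mono_on h01 I1
      · exact (Continuous.intervalIntegrable (by continuity) _ _)
      · intro p hp
        have h1p : 0 ≤ (1 - p) ^ k := pow_nonneg (by linarith [hp.2]) k
        calc f p * (1-p)^k ≤ |f p| * (1-p)^k :=
              mul_le_mul_of_nonneg_right (le_abs_self _) h1p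
          _ ≤ (C * p) * (1-p)^k := mul_le_mul_of_nonneg_right (hfle p hp) h1p
          _ = C * (p * (1-p)^k) := by ring
    have hJ : (∫ p in (0:ℝ)..1, p * (1 - p) ^ k) = 1/((k:ℝ)+1) - 1/((k:ℝ)+2) := by
      have h1 : (∫ p in (0:ℝ)..1, p * (1 - p) ^ k)
          = ∫ p in (0:ℝ)..1, (fun u : ℝ => (1 - u) * u ^ k) (1 - p) := by
        apply intervalIntegral.integral_congr
        intro p _
        simp
      rw [h1, intervalIntegral.integral_comp_sub_left (fun u : ℝ => (1 - u) * u ^ k) 1]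
      norm_num
      have h2 : (∫ u in (0:ℝ)..1, (1 - u) * u ^ k)
          = ∫ u in (0:ℝ)..1, (u ^ k - u ^ (k+1)) := by
        apply intervalIntegral.integral_congr
        intro u _; ring
      rw [h2, intervalIntegral.integral_sub ((continuous_pow k).intervalIntegrable _ _)
        ((continuous_pow (k+1)).intervalIntegrable _ _)]
      simp [integral_pow]
      push_cast
      ring
    calc Ek ≤ C * (1/((k:ℝ)+1) - 1/((k:ℝ)+2)) := by
          rw [intervalIntegral.integral_const_mul, hJ] at hmono; exact hmono
      _ ≤ C * (1/(k:ℝ)^2) := by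
          apply mul_le_mul_of_nonneg_left _ hC0
          rw [div_sub_div _ _ (by positivity) (by positivity),
            div_le_div_iff₀ (by positivity) (by positivity)]
          nlinarith
      _ = C / (k:ℝ)^2 := by ring
  set D := ∫ p in (0:ℝ)..1, f p * (1 - (1 - p) ^ k) with hDdef
  have hDval : D = 1 - Ek := by
    have h3 : D = ∫ p in (0:ℝ)..1, (f p - f p * (1 - p)^k) := by
      apply intervalIntegral.integral_congr; intro p _; ring
    rw [h3, intervalIntegral.integral_sub If I1, hf_density]
  have hDpos : (0:ℝ) < D := (hden k hk1).1
  clear_value Δ Ek D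
  have hDhalf : (1:ℝ)/2 ≤ D := by
    rw [hDval]
    have hhalf : Ek ≤ 1/2 := by
      refine hEk_le.trans ?_
      rw [div_le_div_iff₀ (by positivity) (by norm_num : (0:ℝ) < 2)]
      nlinarith
    linarith
  have key : Δ / D - Δ = Δ * Ek / D := by
    field_simp
    rw [hDval]; ring
  rw [key, abs_div, abs_of_pos hDpos, abs_mul, abs_of_nonneg hEk_nonneg,
    div_le_iff₀ hDpos]
  calc |Δ| * Ek ≤ |Δ| * (C/(k:ℝ)^2) := mul_le_mul_of_nonneg_left hEk_le (abs_nonneg _)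
    _ = (2 * |Δ| * C / (k:ℝ)^2) * (1/2) := by ring
    _ ≤ (2 * |Δ| * C / (k:ℝ)^2) * D := by
        apply mul_le_mul_of_nonneg_left hDhalf (by positivity)
end

section
/- Let μ be a probability measure on [0,1] with density f, and for k ≥ 1 define the tilted measure μ_k with density proportional to f(p)(1−(1−p)^k). Then the mean activity of observed users ∫ p dμ_k(p) is at least the population mean activity ∫ p dμ(p), and it is nonincreasing in k. -/
/-!
Both claims compare the mean of `p` under two weights `f a` and `f b` on `[0, 1]` where `b / a`
is nondecreasing (likelihood-ratio order): `a = 1, b = 1 - (1 - p)^k` for the first and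
`a = 1 - (1 - p)^(k+1), b = 1 - (1 - p)^k` for the second. For such weights the difference
`(∫ f a)(∫ p f b) - (∫ p f a)(∫ f b)` is half the double integral of
`f x f y (x - y)(b x a y - b y a x) ≥ 0`, a Chebyshev-type argument. The monotonicity of
`(1 - u^(k+1)) / (1 - u^k)` reduces, via geometric sums, to the termwise inequality
`u^k v^i ≤ v^k u^i` for `0 ≤ u ≤ v`, `i < k`.
-/

open MeasureTheory Finset Set

theorem integral_mul_integral_le_of_cross_nonneg {α : Type*} [MeasurableSpace α] {μ : Measure α}
    {t u v : α → ℝ} (hu : Integrable u μ) (hv : Integrable v μ)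
    (htu : Integrable (fun x => t x * u x) μ) (htv : Integrable (fun x => t x * v x) μ)
    (hcross : ∀ᵐ x ∂μ, ∀ᵐ y ∂μ, 0 ≤ (t x - t y) * (u x * v y - u y * v x)) :
    (∫ x, u x ∂μ) * (∫ x, t x * v x ∂μ) ≤ (∫ x, t x * u x ∂μ) * (∫ x, v x ∂μ) := by
  set U := ∫ x, u x ∂μ
  set V := ∫ x, v x ∂μ
  set TU := ∫ x, t x * u x ∂μ
  set TV := ∫ x, t x * v x ∂μ
  -- The double integral of the cross term is separable, so no Fubini is needed.
  have inner : ∀ x, ∫ y, (t x - t y) * (u x * v y - u y * v x) ∂μ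
      = t x * u x * V - u x * TV - (t x * v x * U - v x * TU) := by
    intro x
    have hsplit : (fun y => (t x - t y) * (u x * v y - u y * v x)) = fun y =>
        t x * u x * v y - u x * (t y * v y) - (t x * v x * u y - v x * (t y * u y)) := by
      funext y; ring
    rw [hsplit, integral_sub (by fun_prop) (by fun_prop), integral_sub (by fun_prop) (by fun_prop),
      integral_sub (by fun_prop) (by fun_prop), integral_const_mul, integral_const_mul,
      integral_const_mul, integral_const_mul]
  have outer : ∫ x, (t x * u x * V - u x * TV - (t x * v x * U - v x * TU)) ∂μ
      = 2 * (TU * V - U * TV) := by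
    rw [integral_sub (by fun_prop) (by fun_prop), integral_sub (by fun_prop) (by fun_prop),
      integral_sub (by fun_prop) (by fun_prop), integral_mul_const, integral_mul_const,
      integral_mul_const, integral_mul_const]
    ring
  have hnonneg : 0 ≤ ∫ x, ∫ y, (t x - t y) * (u x * v y - u y * v x) ∂μ ∂μ :=
    integral_nonneg_of_ae (hcross.mono fun x hx => integral_nonneg_of_ae hx)
  simp only [inner, outer] at hnonneg
  linarith

theorem pow_mul_geom_sum_le {u v : ℝ} (hu : 0 ≤ u) (huv : u ≤ v) (k : ℕ) :
    u ^ k * ∑ i ∈ range k, v ^ i ≤ v ^ k * ∑ i ∈ range k, u ^ i := by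
  rw [mul_sum, mul_sum]
  refine sum_le_sum fun i hi => ?_
  obtain ⟨j, rfl⟩ := Nat.exists_eq_add_of_lt (mem_range.mp hi)
  calc u ^ (i + j + 1) * v ^ i = (u * v) ^ i * u ^ (j + 1) := by ring
    _ ≤ (u * v) ^ i * v ^ (j + 1) := by gcongr; exact pow_nonneg (mul_nonneg hu (hu.trans huv)) _
    _ = v ^ (i + j + 1) * u ^ i := by ring

theorem one_sub_pow_succ_mul_one_sub_pow_le {u v : ℝ} (hu : 0 ≤ u) (huv : u ≤ v) (hv : v ≤ 1)
    (k : ℕ) : (1 - u ^ (k + 1)) * (1 - v ^ k) ≤ (1 - v ^ (k + 1)) * (1 - u ^ k) := by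
  simp only [← geom_sum_mul_neg, sum_range_succ]
  have hcore := pow_mul_geom_sum_le hu huv k
  have hfac : 0 ≤ (1 - u) * (1 - v) := mul_nonneg (by linarith) (by linarith)
  nlinarith [mul_le_mul_of_nonneg_left hcore hfac]

theorem intervalIntegral_mean_le_of_cross_le {l r : ℝ} (hlr : l ≤ r) {f a b : ℝ → ℝ}
    (hf : ∀ p ∈ Icc l r, 0 ≤ f p) (hf_int : IntervalIntegrable f volume l r)
    (ha : ContinuousOn a (Icc l r)) (hb : ContinuousOn b (Icc l r))
    (hab : ∀ x ∈ Icc l r, ∀ y ∈ Icc l r, y ≤ x → a x * b y ≤ a y * b x) :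
    (∫ p in l..r, p * f p * a p) * (∫ p in l..r, f p * b p)
      ≤ (∫ p in l..r, f p * a p) * (∫ p in l..r, p * f p * b p) := by
  rw [← uIcc_of_le hlr] at ha hb
  have hweighted {w : ℝ → ℝ} (hw : ContinuousOn w (uIcc l r)) :
      IntegrableOn (fun p => f p * w p) (Ioc l r) ∧
        IntegrableOn (fun p => p * (f p * w p)) (Ioc l r) := by
    simp only [← intervalIntegrable_iff_integrableOn_Ioc_of_le hlr]
    exact ⟨hf_int.mul_continuousOn hw, (hf_int.mul_continuousOn hw).continuousOn_mul continuousOn_id⟩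
  have hcross : ∀ x ∈ Icc l r, ∀ y ∈ Icc l r,
      0 ≤ (x - y) * (f x * b x * (f y * a y) - f y * b y * (f x * a x)) := by
    intro x hx y hy
    have hff := mul_nonneg (hf x hx) (hf y hy)
    rcases le_total y x with hyx | hxy
    · nlinarith [mul_le_mul_of_nonneg_left (hab x hx y hy hyx) hff, sub_nonneg.mpr hyx]
    · nlinarith [mul_le_mul_of_nonneg_left (hab y hy x hx hxy) hff, sub_nonneg.mpr hxy]
  have hcross_ae : ∀ᵐ x ∂volume.restrict (Ioc l r), ∀ᵐ y ∂volume.restrict (Ioc l r),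
      0 ≤ (x - y) * (f x * b x * (f y * a y) - f y * b y * (f x * a x)) :=
    ae_restrict_of_forall_mem measurableSet_Ioc fun x hx =>
      ae_restrict_of_forall_mem measurableSet_Ioc fun y hy =>
        hcross x (Ioc_subset_Icc_self hx) y (Ioc_subset_Icc_self hy)
  have key := integral_mul_integral_le_of_cross_nonneg (hweighted hb).1 (hweighted ha).1
    (hweighted hb).2 (hweighted ha).2 hcross_ae
  simp only [intervalIntegral.integral_of_le hlr, mul_assoc]
  linarith

/-- The mean activity of observed users is at least the population mean activity, and is
nonincreasing in the experiment duration `k`. -/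
theorem observed_mean_activity_ge_and_antitone
    (f : ℝ → ℝ)
    (hf_nonneg : ∀ p ∈ Set.Icc (0:ℝ) 1, 0 ≤ f p)
    (hf_density : ∫ p in (0:ℝ)..1, f p = 1)
    (hf_int : IntervalIntegrable f MeasureTheory.volume 0 1)
    (hden_pos : ∀ k : ℕ, 1 ≤ k → 0 < ∫ p in (0:ℝ)..1, f p * (1 - (1 - p) ^ k)) :
    (∀ k : ℕ, 1 ≤ k →
      (∫ p in (0:ℝ)..1, p * f p) ≤
        (∫ p in (0:ℝ)..1, p * f p * (1 - (1 - p) ^ k))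
          / ∫ p in (0:ℝ)..1, f p * (1 - (1 - p) ^ k)) ∧
    (∀ k : ℕ, 1 ≤ k →
      (∫ p in (0:ℝ)..1, p * f p * (1 - (1 - p) ^ (k + 1)))
          / (∫ p in (0:ℝ)..1, f p * (1 - (1 - p) ^ (k + 1)))
        ≤ (∫ p in (0:ℝ)..1, p * f p * (1 - (1 - p) ^ k))
          / ∫ p in (0:ℝ)..1, f p * (1 - (1 - p) ^ k)) := by
  have hcont (k : ℕ) : ContinuousOn (fun p : ℝ => 1 - (1 - p) ^ k) (Icc 0 1) := by fun_prop
  constructor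
  · intro k hk
    have hmean := intervalIntegral_mean_le_of_cross_le zero_le_one hf_nonneg hf_int
      (continuousOn_const (c := 1)) (hcont k) fun x hx y _ hyx => by
        simpa only [one_mul, mul_one] using sub_le_sub_left
          (pow_le_pow_left₀ (sub_nonneg.mpr hx.2) (sub_le_sub_left hyx 1) k) 1
    simp only [mul_one, hf_density] at hmean
    rw [le_div_iff₀ (hden_pos k hk)]
    linarith
  · intro k hk
    have hmean := intervalIntegral_mean_le_of_cross_le zero_le_one hf_nonneg hf_int
      (hcont (k + 1)) (hcont k) fun x hx y hy hyx =>
        one_sub_pow_succ_mul_one_sub_pow_le (sub_nonneg.mpr hx.2) (sub_le_sub_left hyx 1)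
          (sub_le_self 1 hy.1) k
    rw [div_le_div_iff₀ (hden_pos (k + 1) (by omega)) (hden_pos k hk)]
    linarith
end
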